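/- arXiv:1805.08195 — 3 statements merged into one kernel-verified Lean document; each statement's English description precedes it below -/
import Mathlib

section
/- Nash equilibrium strategies are maximin strategies: in a finite two-player zero-sum game, if (p, q) is a Nash equilibrium in mixed strategies, then p maximizes the guaranteed payoff, i.e. u(p, q) = sInf {u(p, q') | q' a mixed strategy of player 2}, and for every mixed strategy p' of player 1, sInf {u(p', q') | q' a mixed strategy of player 2} ≤ u(p, q). -/
/-- A mixed strategy over a finite action set. -/
def IsMixed {I : Type*} [Fintype I] (p : I → ℝ) : Prop :=
  (∀ i, 0 ≤ p i) ∧ ∑ i, p i = 1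

/-- Expected payoff to player 1 in the two-player zero-sum game with payoff matrix `A`. -/
def u {I J : Type*} [Fintype I] [Fintype J] (A : I → J → ℝ)
    (p : I → ℝ) (q : J → ℝ) : ℝ :=
  ∑ i, ∑ j, p i * A i j * q j

/-- A Nash equilibrium in mixed strategies. -/
def IsNash {I J : Type*} [Fintype I] [Fintype J] (A : I → J → ℝ)
    (p : I → ℝ) (q : J → ℝ) : Prop :=
  IsMixed p ∧ IsMixed q ∧
    (∀ p' : I → ℝ, IsMixed p' → u A p' q ≤ u A p q) ∧
    (∀ q' : J → ℝ, IsMixed q' → u A p q ≤ u A p q')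

theorem nash_is_maximin {I J : Type*} [Fintype I] [Fintype J]
    [Nonempty I] [Nonempty J] (A : I → J → ℝ)
    (p : I → ℝ) (q : J → ℝ) (h : IsNash A p q) :
    u A p q = sInf {x : ℝ | ∃ q' : J → ℝ, IsMixed q' ∧ u A p q' = x} ∧
    ∀ p' : I → ℝ, IsMixed p' →
      sInf {x : ℝ | ∃ q' : J → ℝ, IsMixed q' ∧ u A p' q' = x} ≤ u A p q := by
  obtain ⟨hp, hq, h1, h2⟩ := h
  have hbdd : ∀ p' : I → ℝ,
      BddBelow {x : ℝ | ∃ q' : J → ℝ, IsMixed q' ∧ u A p' q' = x} := by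
    intro p'
    refine ⟨Finset.univ.inf' Finset.univ_nonempty (fun j => ∑ i, p' i * A i j), ?_⟩
    rintro x ⟨q', hq', rfl⟩
    have hrw : u A p' q' = ∑ j, (∑ i, p' i * A i j) * q' j := by
      rw [u, Finset.sum_comm]
      simp [Finset.sum_mul]
    rw [hrw]
    calc Finset.univ.inf' Finset.univ_nonempty (fun j => ∑ i, p' i * A i j)
        = ∑ j, Finset.univ.inf' Finset.univ_nonempty (fun j => ∑ i, p' i * A i j) * q' j := by
          rw [← Finset.mul_sum, hq'.2, mul_one]
      _ ≤ ∑ j, (∑ i, p' i * A i j) * q' j := by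
          apply Finset.sum_le_sum
          intro j _
          exact mul_le_mul_of_nonneg_right (Finset.inf'_le _ (Finset.mem_univ j)) (hq'.1 j)
  constructor
  · apply le_antisymm
    · exact le_csInf ⟨u A p q, q, hq, rfl⟩ (by rintro x ⟨q', hq', rfl⟩; exact h2 q' hq')
    · exact csInf_le (hbdd p) ⟨q, hq, rfl⟩
  · intro p' hp'
    exact le_trans (csInf_le (hbdd p') ⟨q, hq, rfl⟩) (h1 p' hp')
end

section
/- Nash equilibria realize the minimax value: in a finite two-player zero-sum game, if (p, q) is a Nash equilibrium in mixed strategies, then sSup {sInf {u(p', q') | q' a mixed strategy of player 2} | p' a mixed strategy of player 1} = sInf {sSup {u(p', q') | p' a mixed strategy of player 1} | q' a mixed strategy of player 2} = u(p, q). -/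
lemma mixed_le_one {I : Type*} [Fintype I] {p : I → ℝ} (hp : IsMixed p) (i : I) : p i ≤ 1 := by
  rw [← hp.2]
  exact Finset.single_le_sum (fun j _ => hp.1 j) (Finset.mem_univ i)

lemma u_abs_le {I J : Type*} [Fintype I] [Fintype J] (A : I → J → ℝ)
    {p : I → ℝ} {q : J → ℝ} (hp : IsMixed p) (hq : IsMixed q) :
    |u A p q| ≤ ∑ i, ∑ j, |A i j| := by
  calc |u A p q| ≤ ∑ i, |∑ j, p i * A i j * q j| := Finset.abs_sum_le_sum_abs _ _
    _ ≤ ∑ i, ∑ j, |p i * A i j * q j| :=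
        Finset.sum_le_sum fun i _ => Finset.abs_sum_le_sum_abs _ _
    _ ≤ ∑ i, ∑ j, |A i j| := by
        refine Finset.sum_le_sum fun i _ => Finset.sum_le_sum fun j _ => ?_
        have h1 : |p i| ≤ 1 := by rw [abs_of_nonneg (hp.1 i)]; exact mixed_le_one hp i
        have h2 : |q j| ≤ 1 := by rw [abs_of_nonneg (hq.1 j)]; exact mixed_le_one hq j
        calc |p i * A i j * q j| = |p i| * |A i j| * |q j| := by rw [abs_mul, abs_mul]
          _ ≤ 1 * |A i j| * 1 :=
              mul_le_mul (mul_le_mul h1 le_rfl (abs_nonneg _) zero_le_one) h2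
                (abs_nonneg _) (by positivity)
          _ = |A i j| := by ring

theorem nash_realizes_minimax {I J : Type*} [Fintype I] [Fintype J]
    [Nonempty I] [Nonempty J] (A : I → J → ℝ)
    (p : I → ℝ) (q : J → ℝ) (h : IsNash A p q) :
    sSup {x : ℝ | ∃ p' : I → ℝ, IsMixed p' ∧
        sInf {y : ℝ | ∃ q' : J → ℝ, IsMixed q' ∧ u A p' q' = y} = x} = u A p q ∧
    sInf {x : ℝ | ∃ q' : J → ℝ, IsMixed q' ∧
        sSup {y : ℝ | ∃ p' : I → ℝ, IsMixed p' ∧ u A p' q' = y} = x} = u A p q := by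
  obtain ⟨hp, hq, h1, h2⟩ := h
  set C := ∑ i, ∑ j, |A i j| with hC
  -- inner inf for a mixed p' is bounded below
  have hbddB : ∀ p' : I → ℝ, IsMixed p' →
      BddBelow {y : ℝ | ∃ q' : J → ℝ, IsMixed q' ∧ u A p' q' = y} := by
    intro p' hp'
    exact ⟨-C, fun y ⟨q', hq', hy⟩ => hy ▸ neg_le_of_abs_le (u_abs_le A hp' hq')⟩
  have hbddA : ∀ q' : J → ℝ, IsMixed q' →
      BddAbove {y : ℝ | ∃ p' : I → ℝ, IsMixed p' ∧ u A p' q' = y} := by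
    intro q' hq'
    exact ⟨C, fun y ⟨p', hp', hy⟩ => hy ▸ le_of_abs_le (u_abs_le A hp' hq')⟩
  -- f p = u A p q
  have hfp : sInf {y : ℝ | ∃ q' : J → ℝ, IsMixed q' ∧ u A p q' = y} = u A p q := by
    apply le_antisymm
    · exact csInf_le (hbddB p hp) ⟨q, hq, rfl⟩
    · exact le_csInf ⟨u A p q, q, hq, rfl⟩ (fun y ⟨q', hq', hy⟩ => hy ▸ h2 q' hq')
  have hgq : sSup {y : ℝ | ∃ p' : I → ℝ, IsMixed p' ∧ u A p' q = y} = u A p q := by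
    apply le_antisymm
    · exact csSup_le ⟨u A p q, p, hp, rfl⟩ (fun y ⟨p', hp', hy⟩ => hy ▸ h1 p' hp')
    · exact le_csSup (hbddA q hq) ⟨p, hp, rfl⟩
  constructor
  · apply le_antisymm
    · refine csSup_le ⟨u A p q, p, hp, hfp⟩ ?_
      rintro x ⟨p', hp', rfl⟩
      calc sInf {y : ℝ | ∃ q' : J → ℝ, IsMixed q' ∧ u A p' q' = y}
          ≤ u A p' q := csInf_le (hbddB p' hp') ⟨q, hq, rfl⟩
        _ ≤ u A p q := h1 p' hp'
    · refine le_csSup ⟨u A p q, ?_⟩ ⟨p, hp, hfp⟩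
      rintro x ⟨p', hp', rfl⟩
      calc sInf {y : ℝ | ∃ q' : J → ℝ, IsMixed q' ∧ u A p' q' = y}
          ≤ u A p' q := csInf_le (hbddB p' hp') ⟨q, hq, rfl⟩
        _ ≤ u A p q := h1 p' hp'
  · apply le_antisymm
    · exact csInf_le ⟨u A p q, fun x ⟨q', hq', hx⟩ => hx ▸
        le_trans (h2 q' hq') (le_csSup (hbddA q' hq') ⟨p, hp, rfl⟩)⟩ ⟨q, hq, hgq⟩
    · refine le_csInf ⟨u A p q, q, hq, hgq⟩ ?_
      rintro x ⟨q', hq', rfl⟩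
      exact le_trans (h2 q' hq') (le_csSup (hbddA q' hq') ⟨p, hp, rfl⟩)
end

section
/- Existence of equilibria in finite zero-sum games (von Neumann): every finite two-player zero-sum game has a Nash equilibrium in mixed strategies, i.e. there exist mixed strategies p of player 1 and q of player 2 such that u(p', q) ≤ u(p, q) for every mixed strategy p' and u(p, q) ≤ u(p, q') for every mixed strategy q'. -/
/-!
The payoff is bilinear in the two mixed strategies, hence continuous, convex in one and concave
in the other, and the strategy sets are compact convex simplices; so Sion's minimax theorem
yields a saddle point, which is exactly an equilibrium.
-/

open Matrix

theorem LinearMap.exists_isSaddlePointOn {E F : Type*}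
    [AddCommGroup E] [Module ℝ E] [TopologicalSpace E] [IsTopologicalAddGroup E]
    [ContinuousSMul ℝ E] [T2Space E] [FiniteDimensional ℝ E]
    [AddCommGroup F] [Module ℝ F] [TopologicalSpace F] [IsTopologicalAddGroup F]
    [ContinuousSMul ℝ F] [T2Space F] [FiniteDimensional ℝ F]
    (B : E →ₗ[ℝ] F →ₗ[ℝ] ℝ) {X : Set E} {Y : Set F}
    (neX : X.Nonempty) (cX : Convex ℝ X) (kX : IsCompact X)
    (neY : Y.Nonempty) (cY : Convex ℝ Y) (kY : IsCompact Y) :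
    ∃ a ∈ X, ∃ b ∈ Y, IsSaddlePointOn X Y (fun x y ↦ B x y) a b :=
  Sion.exists_isSaddlePointOn neX cX kX
    (fun y _ ↦
      (B.flip y).continuous_of_finiteDimensional.lowerSemicontinuous.lowerSemicontinuousOn X)
    (fun y _ ↦ ((B.flip y).convexOn cX).quasiconvexOn) cY neY kY
    (fun x _ ↦
      (B x).continuous_of_finiteDimensional.upperSemicontinuous.upperSemicontinuousOn Y)
    (fun x _ ↦ ((B x).concaveOn cY).quasiconcaveOn)

theorem u_eq_dotProduct_mulVec {I J : Type*} [Fintype I] [Fintype J] (A : I → J → ℝ)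
    (p : I → ℝ) (q : J → ℝ) : u A p q = p ⬝ᵥ (of A *ᵥ q) := by
  simp only [u, dotProduct, mulVec, of_apply, Finset.mul_sum, mul_assoc]

theorem zero_sum_nash_exists {I J : Type*} [Fintype I] [Fintype J]
    [Nonempty I] [Nonempty J] (A : I → J → ℝ) :
    ∃ (p : I → ℝ) (q : J → ℝ), IsMixed p ∧ IsMixed q ∧
      (∀ p' : I → ℝ, IsMixed p' → u A p' q ≤ u A p q) ∧
      (∀ q' : J → ℝ, IsMixed q' → u A p q ≤ u A p q') := by
  -- A saddle point minimizes over the first variable, so the minimizing player 2 comes first.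
  obtain ⟨q, hq, p, hp, hsaddle⟩ :=
    ((dotProductBilin ℝ ℝ).compl₂ (of A).mulVecLin).flip.exists_isSaddlePointOn
      (isPathConnected_stdSimplex J).nonempty (convex_stdSimplex ℝ J) (isCompact_stdSimplex ℝ J)
      (isPathConnected_stdSimplex I).nonempty (convex_stdSimplex ℝ I) (isCompact_stdSimplex ℝ I)
  simp only [LinearMap.flip_apply, LinearMap.compl₂_apply, mulVecLin_apply,
    dotProductBilin_apply_apply, ← u_eq_dotProduct_mulVec] at hsaddle
  exact ⟨p, q, hp, hq, fun p' hp' ↦ hsaddle q hq p' hp', fun q' hq' ↦ hsaddle q' hq' p hp⟩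
end
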